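/- arXiv:1802.07828 — 2 statements merged into one kernel-verified Lean document; each statement's English description precedes it below -/
import Mathlib

section
/- Let x_1, …, x_N be i.i.d. random variables taking values in {1, …, l} with P(x_s = i) = p_i for all s, and let N_i be the empirical count of outcome i. Let p_max = max_i p_i and p_secmax = max over i of p_i excluding one index attaining the maximum (the second largest value of the p_i). If the maximum is attained at a unique index i* and p_max − p_secmax > 2·sqrt(2·log(4l/δ)/N) for some δ > 0, then with probability at least 1 − δ, the index attaining the maximal empirical count N_i is equal to i*, i.e. argmax_i N_i = argmax_i p_i. -/
/-!
For `j ≠ istar`, `N_j - N_istar` is a sum of `N` independent terms with values in `[-1, 1]` and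
mean `-N (p istar - p j) ≤ -N Δ`, where `Δ` is the gap. Hoeffding's inequality bounds
`P(N_istar ≤ N_j)` by `exp (-N Δ² / 2)`, which the gap assumption makes at most `δ / (4 l)`;
a union bound over `j` finishes.
-/

open MeasureTheory ProbabilityTheory Finset Real

lemma le_mul_sq_div_two_of_two_mul_sqrt_lt {L n Δ : ℝ} (hn : 0 < n)
    (h : 2 * √(2 * L / n) < Δ) : L ≤ n * Δ ^ 2 / 2 := by
  have hΔ : 0 < Δ / 2 := by linarith [Real.sqrt_nonneg (2 * L / n)]
  have hL := (Real.sqrt_lt' hΔ).1 (by linarith : √(2 * L / n) < Δ / 2)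
  rw [div_lt_iff₀ hn] at hL
  nlinarith [mul_nonneg hn.le (sq_nonneg Δ)]

section

variable {Ω α ι : Type*} {mΩ : MeasurableSpace Ω} {μ : Measure Ω} [MeasurableSpace α]

lemma integral_comp_eq_sum_measureReal [Fintype α] [MeasurableSingletonClass α]
    [IsFiniteMeasure μ] {X : Ω → α} (hX : Measurable X) (f : α → ℝ) :
    ∫ ω, f (X ω) ∂μ = ∑ a, μ.real {ω | X ω = a} * f a := by
  rw [← integral_map hX.aemeasurable (Measurable.of_discrete (f := f)).aestronglyMeasurable,
    integral_fintype Integrable.of_finite]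
  refine Finset.sum_congr rfl fun a _ ↦ ?_
  rw [map_measureReal_apply hX (measurableSet_singleton a), smul_eq_mul]
  rfl

lemma measureReal_sum_integral_add_le_sum_comp_le {s : Finset ι} {x : ι → Ω → α}
    (hx : ∀ i, Measurable (x i)) (hindep : iIndepFun x μ) {f : α → ℝ} (hf : Measurable f)
    {a b : ℝ} (hfab : ∀ v, f v ∈ Set.Icc a b) {ε : ℝ} (hε : 0 ≤ ε) :
    μ.real {ω | ∑ i ∈ s, ∫ ω, f (x i ω) ∂μ + ε ≤ ∑ i ∈ s, f (x i ω)} ≤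
      exp (-ε ^ 2 / (2 * #s * ((b - a) / 2) ^ 2)) := by
  have := hindep.isProbabilityMeasure
  have hsub : ∀ i ∈ s, HasSubgaussianMGF (fun ω ↦ (f ∘ x i) ω - ∫ ω, f (x i ω) ∂μ)
      ((‖b - a‖₊ / 2) ^ 2) μ := fun i _ ↦
    hasSubgaussianMGF_of_mem_Icc (hf.comp (hx i)).aemeasurable (ae_of_all _ fun ω ↦ hfab _)
  have hindep' : iIndepFun (fun i ω ↦ (f ∘ x i) ω - ∫ ω, f (x i ω) ∂μ) μ :=
    hindep.comp (fun i v ↦ f v - ∫ ω, f (x i ω) ∂μ) fun _ ↦ hf.sub_const _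
  convert HasSubgaussianMGF.measure_sum_ge_le_of_iIndepFun hindep' hsub hε using 3
  · ext ω
    simp only [Function.comp_apply, Finset.sum_sub_distrib]
    constructor <;> intro h <;> linarith
  · simp [div_pow, mul_assoc]

def empiricalCount [Fintype ι] [DecidableEq α] (x : ι → Ω → α) (a : α) (ω : Ω) : ℕ :=
  #{i | x i ω = a}

variable [Fintype ι] [Fintype α] [DecidableEq α] [MeasurableSingletonClass α]
  {x : ι → Ω → α} {p : α → ℝ}

lemma measureReal_empiricalCount_le_le (hx : ∀ i, Measurable (x i)) (hindep : iIndepFun x μ)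
    (hdist : ∀ i a, μ.real {ω | x i ω = a} = p a) {a b : α} (hab : p b ≤ p a) :
    μ.real {ω | empiricalCount x a ω ≤ empiricalCount x b ω} ≤
      exp (-(Fintype.card ι * (p a - p b) ^ 2) / 2) := by
  have := hindep.isProbabilityMeasure
  set f : α → ℝ := fun v ↦ (if v = b then 1 else 0) - if v = a then 1 else 0
  have hf : ∀ v, f v ∈ Set.Icc (-1) 1 := by intro v; simp only [f]; split_ifs <;> norm_num
  have hmean : ∀ i, ∫ ω, f (x i ω) ∂μ = p b - p a := by
    intro i
    rw [integral_comp_eq_sum_measureReal (hx i)]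
    simp [f, hdist, mul_sub, Finset.sum_sub_distrib]
  have hcount : ∀ ω, ∑ i, f (x i ω) = (empiricalCount x b ω : ℝ) - empiricalCount x a ω := by
    intro ω
    simp [f, Finset.sum_sub_distrib, Finset.sum_boole, empiricalCount]
  convert measureReal_sum_integral_add_le_sum_comp_le (s := univ) hx hindep
    Measurable.of_discrete hf (mul_nonneg (Nat.cast_nonneg (Fintype.card ι)) (sub_nonneg.2 hab))
    using 2
  · ext ω
    simp only [hmean, hcount, Finset.sum_const, Finset.card_univ, nsmul_eq_mul]
    rw [Set.mem_ofPred_eq, Set.mem_ofPred_eq, ← @Nat.cast_le ℝ]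
    constructor <;> intro h <;> linarith
  · rcases (Fintype.card ι).eq_zero_or_pos with h | h
    · simp [h]
    · rw [Finset.card_univ]
      field_simp
      ring

lemma one_sub_mul_exp_le_measureReal_empiricalCount_lt (hx : ∀ i, Measurable (x i))
    (hindep : iIndepFun x μ) (hdist : ∀ i a, μ.real {ω | x i ω = a} = p a) {a : α} {Δ : ℝ}
    (hΔ : 0 ≤ Δ) (hgap : ∀ b ≠ a, Δ ≤ p a - p b) :
    1 - Fintype.card α * exp (-(Fintype.card ι * Δ ^ 2) / 2) ≤
      μ.real {ω | ∀ b ≠ a, empiricalCount x b ω < empiricalCount x a ω} := by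
  have := hindep.isProbabilityMeasure
  set bad : α → Set Ω := fun b ↦ {ω | empiricalCount x a ω ≤ empiricalCount x b ω}
  have hbad : ∀ b ∈ univ.erase a, μ.real (bad b) ≤ exp (-(Fintype.card ι * Δ ^ 2) / 2) := by
    intro b hb
    have hab := hgap b (ne_of_mem_erase hb)
    refine (measureReal_empiricalCount_le_le hx hindep hdist (by linarith)).trans ?_
    gcongr
  have hunion : μ.real (⋃ b ∈ univ.erase a, bad b) ≤
      Fintype.card α * exp (-(Fintype.card ι * Δ ^ 2) / 2) := calc
    _ ≤ ∑ b ∈ univ.erase a, μ.real (bad b) := measureReal_biUnion_finset_le _ _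
    _ ≤ ∑ _b ∈ univ.erase a, exp (-(Fintype.card ι * Δ ^ 2) / 2) := sum_le_sum hbad
    _ ≤ _ := by
      rw [sum_const, nsmul_eq_mul]
      gcongr
      exact_mod_cast card_erase_le
  set good := {ω | ∀ b ≠ a, empiricalCount x b ω < empiricalCount x a ω}
  have hcover : (⋃ b ∈ univ.erase a, bad b) ∪ good = Set.univ := by
    refine Set.eq_univ_of_forall fun ω ↦ ?_
    by_cases h : ∃ b ≠ a, empiricalCount x a ω ≤ empiricalCount x b ω
    · obtain ⟨b, hb, hle⟩ := h
      exact Or.inl (Set.mem_biUnion (mem_erase.2 ⟨hb, mem_univ b⟩) hle)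
    · push Not at h
      exact Or.inr h
  have hsplit := measureReal_union_le (μ := μ) (⋃ b ∈ univ.erase a, bad b) good
  rw [hcover, probReal_univ] at hsplit
  linarith

end

theorem empirical_argmax_eq_true_argmax_general
    {Ω : Type*} [MeasureSpace Ω]
    (l N : ℕ) (hN : 0 < N)
    (p : Fin l → ℝ) (hp0 : ∀ i, 0 ≤ p i)
    (x : Fin N → Ω → Fin l) (hmeas : ∀ s, Measurable (x s))
    (hindep : iIndepFun x ℙ)
    (hdist : ∀ s i, ℙ {ω | x s ω = i} = ENNReal.ofReal (p i))
    (δ : ℝ) (hδ : 0 < δ)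
    (istar : Fin l)
    (hne : (Finset.univ.erase istar).Nonempty)
    (hgap : p istar - (Finset.univ.erase istar).sup' hne p >
      2 * Real.sqrt (2 * Real.log (4 * l / δ) / N)) :
    ENNReal.ofReal (1 - δ) ≤
      ℙ {ω | ∀ j : Fin l, j ≠ istar →
        ((Finset.univ.filter fun s : Fin N => x s ω = j).card : ℝ) <
          ((Finset.univ.filter fun s : Fin N => x s ω = istar).card : ℝ)} := by
  set Δ := p istar - (univ.erase istar).sup' hne p
  have hl : (0 : ℝ) < l := Nat.cast_pos.2 istar.pos
  have hΔ : 0 ≤ Δ := by linarith [Real.sqrt_nonneg (2 * Real.log (4 * l / δ) / N)]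
  have hlog := le_mul_sq_div_two_of_two_mul_sqrt_lt (Nat.cast_pos.2 hN) hgap
  have hdist' : ∀ s i, (ℙ : Measure Ω).real {ω | x s ω = i} = p i := fun s i ↦ by
    rw [measureReal_def, hdist, ENNReal.toReal_ofReal (hp0 i)]
  have hgood := one_sub_mul_exp_le_measureReal_empiricalCount_lt hmeas hindep hdist' hΔ
    fun j hj ↦ sub_le_sub_left (le_sup' p (mem_erase.2 ⟨hj, mem_univ j⟩)) _
  have hsmall : l * exp (-(N * Δ ^ 2) / 2) ≤ δ := calc
    _ ≤ l * exp (-Real.log (4 * l / δ)) := by gcongr; linarith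
    _ = δ / 4 := by rw [exp_neg, exp_log (by positivity), inv_div]; field_simp
    _ ≤ δ := by linarith
  have := hindep.isProbabilityMeasure
  simp_rw [Nat.cast_lt]
  rw [← ofReal_measureReal]
  refine ENNReal.ofReal_le_ofReal (le_trans ?_ hgood)
  simp only [Fintype.card_fin]
  linarith

/-- Theorem 1 of the paper: for i.i.d. samples `x 1, …, x N` from a multinomial
distribution on `{1, …, l}` with probabilities `p i` and empirical counts `N_i`,
if the maximum of `p` is attained at a unique index `istar` and the gap between
the largest probability and the second largest probability exceeds
`2·sqrt(2·log(4l/δ)/N)`, then with probability at least `1 − δ` the index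
attaining the maximal empirical count is `istar`. -/
theorem empirical_argmax_eq_true_argmax
    {Ω : Type*} [MeasureSpace Ω] [IsProbabilityMeasure (ℙ : Measure Ω)]
    (l N : ℕ) (hl : 0 < l) (hN : 0 < N)
    (p : Fin l → ℝ) (hp0 : ∀ i, 0 ≤ p i) (hpsum : ∑ i, p i = 1)
    (x : Fin N → Ω → Fin l) (hmeas : ∀ s, Measurable (x s))
    (hindep : iIndepFun x ℙ)
    (hdist : ∀ s i, ℙ {ω | x s ω = i} = ENNReal.ofReal (p i))
    (δ : ℝ) (hδ : 0 < δ)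
    (istar : Fin l) (hstar : ∀ j, j ≠ istar → p j < p istar)
    (hne : (Finset.univ.erase istar).Nonempty)
    (hgap : p istar - (Finset.univ.erase istar).sup' hne p >
      2 * Real.sqrt (2 * Real.log (4 * l / δ) / N)) :
    ENNReal.ofReal (1 - δ) ≤
      ℙ {ω | ∀ j : Fin l, j ≠ istar →
        ((Finset.univ.filter fun s : Fin N => x s ω = j).card : ℝ) <
          ((Finset.univ.filter fun s : Fin N => x s ω = istar).card : ℝ)} :=
  empirical_argmax_eq_true_argmax_general l N hN p hp0 x hmeas hindep hdist δ hδ istar hne hgap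
end

section
/- (Bretagnolle–Huber–Carol inequality.) Let x_1, …, x_N be i.i.d. random variables taking values in {1, …, l} with P(x_s = i) = p_i, and let N_i be the empirical count of outcome i. Then for every λ > 0, P( Σ_{i=1}^{l} | N_i / N − p_i | ≥ λ ) ≤ 2^l · exp( − N·λ² / 2 ). -/
/-!
Since both the empirical frequencies `N_i / N` and the `p_i` sum to one, the ℓ¹ distance
`∑ |N_i / N - p_i|` is twice the excess `#{s | x_s ∈ A} / N - ∑_{i ∈ A} p_i` on the set `A` of
outcomes where the empirical frequency is at least `p_i`. So the event lies in the union, over the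
`2^l` subsets `A`, of the events that this excess is at least `λ / 2`. Each of these is a deviation
of a sum of `N` independent `[0, 1]`-valued indicators, which Hoeffding's inequality bounds by
`exp (-2 N (λ / 2)²) = exp (-N λ² / 2)`.
-/

open MeasureTheory ProbabilityTheory

open Finset in
theorem Finset.sum_abs_eq_two_mul_sum_filter_nonneg {ι : Type*} (s : Finset ι) {a : ι → ℝ}
    (h : ∑ i ∈ s, a i = 0) : ∑ i ∈ s, |a i| = 2 * ∑ i ∈ s with 0 ≤ a i, a i := by
  have hsplit := sum_filter_add_sum_filter_not s (0 ≤ a ·) a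
  rw [← sum_filter_add_sum_filter_not s (fun i => 0 ≤ a i),
    sum_congr rfl fun i hi => abs_of_nonneg (mem_filter.mp hi).2,
    sum_congr rfl fun i hi => abs_of_neg (not_le.mp (mem_filter.mp hi).2), sum_neg_distrib]
  linarith

open Finset in
theorem exists_finset_sum_abs_empirical_sub_eq {κ ι : Type*} [Fintype κ] [Nonempty κ]
    [Fintype ι] [DecidableEq ι] (f : κ → ι) {p : ι → ℝ} (hp : ∑ i, p i = 1) :
    ∃ A : Finset ι, ∑ i, |(#{s | f s = i} : ℝ) / Fintype.card κ - p i| =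
      2 * ((#{s | f s ∈ A} : ℝ) / Fintype.card κ - ∑ i ∈ A, p i) := by
  have hcard : (0 : ℝ) < Fintype.card κ := by exact_mod_cast Fintype.card_pos
  have hsum_empirical : ∀ A : Finset ι,
      ∑ i ∈ A, (#{s | f s = i} : ℝ) / Fintype.card κ = #{s | f s ∈ A} / Fintype.card κ := by
    intro A
    rw [← sum_div, ← Nat.cast_sum, sum_card_fiberwise_eq_card_filter]
  set a : ι → ℝ := fun i => (#{s | f s = i} : ℝ) / Fintype.card κ - p i
  have ha : ∑ i, a i = 0 := by
    simp only [a, sum_sub_distrib, hsum_empirical, hp, filter_true_of_mem fun _ _ => mem_univ _,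
      card_univ, div_self hcard.ne', sub_self]
  refine ⟨univ.filter (0 ≤ a ·), ?_⟩
  rw [sum_abs_eq_two_mul_sum_filter_nonneg _ ha, sum_sub_distrib, hsum_empirical]

theorem measureReal_preimage_finset_eq_sum {Ω ι : Type*} [MeasurableSpace Ω]
    [MeasurableSpace ι] [MeasurableSingletonClass ι] {μ : Measure Ω} {X : Ω → ι}
    (hX : Measurable X) {p : ι → ℝ} (hp0 : ∀ i, 0 ≤ p i)
    (hdist : ∀ i, μ {ω | X ω = i} = ENNReal.ofReal (p i)) (A : Finset ι) :
    μ.real (X ⁻¹' A) = ∑ i ∈ A, p i := by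
  rw [← sum_measureReal_preimage_singleton _ (fun i _ => hX (measurableSet_singleton i))
    fun i _ => (hdist i).trans_ne ENNReal.ofReal_ne_top]
  refine Finset.sum_congr rfl fun i _ => ?_
  simp only [measureReal_def, Set.preimage, Set.mem_singleton_iff, hdist,
    ENNReal.toReal_ofReal (hp0 i)]

section Hoeffding

variable {Ω α ι : Type*} [MeasurableSpace Ω] [MeasurableSpace α] {μ : Measure Ω}
  [IsProbabilityMeasure μ] [Fintype ι] {x : ι → Ω → α}

open Finset Real in
theorem measureReal_card_filter_sub_ge_le (hmeas : ∀ s, Measurable (x s))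
    (hindep : iIndepFun x μ) {B : Set α} [DecidablePred (· ∈ B)] (hB : MeasurableSet B)
    {ε : ℝ} (hε : 0 ≤ ε) :
    μ.real {ω | ε ≤ #{s | x s ω ∈ B} - ∑ s, μ.real (x s ⁻¹' B)} ≤
      exp (-2 * ε ^ 2 / Fintype.card ι) := by
  set Y : ι → Ω → ℝ := fun s => B.indicator 1 ∘ x s
  have hYmeas : ∀ s, Measurable (Y s) := fun s =>
    (measurable_const.indicator hB).comp (hmeas s)
  have hmean : ∀ s, μ[Y s] = μ.real (x s ⁻¹' B) := fun s => by
    change ∫ ω, (x s ⁻¹' B).indicator 1 ω ∂μ = _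
    exact integral_indicator_one ((hmeas s) hB)
  have hsubG : ∀ s ∈ (univ : Finset ι),
      HasSubgaussianMGF (fun ω => Y s ω - μ[Y s]) ((‖(1 : ℝ) - 0‖₊ / 2) ^ 2) μ := by
    intro s _
    refine hasSubgaussianMGF_of_mem_Icc (hYmeas s).aemeasurable (ae_of_all _ fun ω => ?_)
    by_cases h : x s ω ∈ B <;> simp [Y, h]
  have hsum : ∀ ω, ∑ s, (Y s ω - μ[Y s]) = #{s | x s ω ∈ B} - ∑ s, μ.real (x s ⁻¹' B) := by
    intro ω
    simp only [sum_sub_distrib, hmean]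
    congr 1
    simp [Y, Set.indicator_apply]
  have hindepY : iIndepFun (fun s ω => Y s ω - μ[Y s]) μ := by
    exact hindep.comp (fun s a => B.indicator (1 : α → ℝ) a - μ[Y s])
      fun s => (measurable_const.indicator hB).sub_const _
  calc μ.real {ω | ε ≤ #{s | x s ω ∈ B} - ∑ s, μ.real (x s ⁻¹' B)}
      = μ.real {ω | ε ≤ ∑ s, (Y s ω - μ[Y s])} := by simp only [hsum]
    _ ≤ exp (-ε ^ 2 / (2 * ∑ s : ι, ((‖(1 : ℝ) - 0‖₊ / 2) ^ 2 : NNReal))) :=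
      HasSubgaussianMGF.measure_sum_ge_le_of_iIndepFun hindepY hsubG hε
    _ = exp (-2 * ε ^ 2 / Fintype.card ι) := by
      congr 1
      simp only [sub_zero, nnnorm_one, sum_const, card_univ, nsmul_eq_mul, NNReal.coe_mul,
        NNReal.coe_natCast, NNReal.coe_div, NNReal.coe_pow, NNReal.coe_one, NNReal.coe_ofNat]
      ring
end Hoeffding

open Finset Real in
theorem bretagnolle_huber_carol_general
    {Ω : Type*} [MeasureSpace Ω] [IsProbabilityMeasure (ℙ : Measure Ω)]
    (l N : ℕ) (hN : 0 < N)
    (p : Fin l → ℝ) (hp0 : ∀ i, 0 ≤ p i) (hpsum : ∑ i, p i = 1)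
    (x : Fin N → Ω → Fin l) (hmeas : ∀ s, Measurable (x s))
    (hindep : iIndepFun x ℙ)
    (hdist : ∀ s i, ℙ {ω | x s ω = i} = ENNReal.ofReal (p i))
    (lam : ℝ) (hlam : 0 < lam) :
    ℙ {ω | lam ≤ ∑ i : Fin l,
        |((Finset.univ.filter fun s : Fin N => x s ω = i).card : ℝ) / N - p i|} ≤
      ENNReal.ofReal (2 ^ l * Real.exp (-(N : ℝ) * lam ^ 2 / 2)) := by
  have : Nonempty (Fin N) := ⟨⟨0, hN⟩⟩
  have hNpos : (0 : ℝ) < N := by exact_mod_cast hN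
  set E : Finset (Fin l) → Set Ω := fun A =>
    {ω | N * lam / 2 ≤ #{s | x s ω ∈ (A : Set (Fin l))} - ∑ s, (ℙ : Measure Ω).real (x s ⁻¹' A)}
  have hcover : {ω | lam ≤ ∑ i : Fin l,
      |((Finset.univ.filter fun s : Fin N => x s ω = i).card : ℝ) / N - p i|} ⊆ ⋃ A, E A := by
    intro ω hω
    obtain ⟨A, hA⟩ := exists_finset_sum_abs_empirical_sub_eq (x · ω) hpsum
    rw [Fintype.card_fin] at hA
    have hexcess := mul_le_mul_of_nonneg_left (hω.trans_eq hA) hNpos.le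
    rw [mul_left_comm, mul_sub, mul_div_cancel₀ _ hNpos.ne'] at hexcess
    refine Set.mem_iUnion.2 ⟨A, ?_⟩
    simp only [E, Set.mem_ofPred_eq, mem_coe, sum_const, card_univ, Fintype.card_fin,
      measureReal_preimage_finset_eq_sum (hmeas _) hp0 (hdist _), nsmul_eq_mul]
    linarith
  have hE : ∀ A, (ℙ : Measure Ω).real (E A) ≤ exp (-(N : ℝ) * lam ^ 2 / 2) := fun A => by
    convert measureReal_card_filter_sub_ge_le hmeas hindep A.measurableSet
      (by positivity : 0 ≤ N * lam / 2) using 2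
    rw [Fintype.card_fin]
    field_simp
  rw [ENNReal.le_ofReal_iff_toReal_le (measure_ne_top _ _) (by positivity)]
  calc (ℙ : Measure Ω).real _ ≤ (ℙ : Measure Ω).real (⋃ A, E A) := measureReal_mono hcover
    _ ≤ ∑ A, (ℙ : Measure Ω).real (E A) := measureReal_iUnion_fintype_le _
    _ ≤ ∑ _A : Finset (Fin l), exp (-(N : ℝ) * lam ^ 2 / 2) := sum_le_sum fun A _ => hE A
    _ = 2 ^ l * exp (-(N : ℝ) * lam ^ 2 / 2) := by simp [Fintype.card_finset]

/-- Bretagnolle–Huber–Carol inequality: for i.i.d. samples `x 1, …, x N` from a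
multinomial distribution on `{1, …, l}` with probabilities `p i`, and empirical
counts `N_i`, for every `λ > 0`,
`P(Σ_i |N_i/N − p_i| ≥ λ) ≤ 2^l · exp(−N·λ²/2)`. -/
theorem bretagnolle_huber_carol
    {Ω : Type*} [MeasureSpace Ω] [IsProbabilityMeasure (ℙ : Measure Ω)]
    (l N : ℕ) (hl : 0 < l) (hN : 0 < N)
    (p : Fin l → ℝ) (hp0 : ∀ i, 0 ≤ p i) (hpsum : ∑ i, p i = 1)
    (x : Fin N → Ω → Fin l) (hmeas : ∀ s, Measurable (x s))
    (hindep : iIndepFun x ℙ)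
    (hdist : ∀ s i, ℙ {ω | x s ω = i} = ENNReal.ofReal (p i))
    (lam : ℝ) (hlam : 0 < lam) :
    ℙ {ω | lam ≤ ∑ i : Fin l,
        |((Finset.univ.filter fun s : Fin N => x s ω = i).card : ℝ) / N - p i|} ≤
      ENNReal.ofReal (2 ^ l * Real.exp (-(N : ℝ) * lam ^ 2 / 2)) :=
  bretagnolle_huber_carol_general l N hN p hp0 hpsum x hmeas hindep hdist lam hlam
end
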